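/- Let A be a line arrangement in ℝ² with |A| = n lines, maximal multiplicity m(A) and maximal number of parallel lines p(A), and set ν_f(A) = min{n − m(A) + 1, n − p(A)}. If 0 < d < ν_f(A), then every polynomial vector field χ of degree exactly d (i.e., max(deg P, deg Q) = d) that fixes every line of A has only a finite set of invariant lines (i.e., D_d(A) = D_d^f(A)). -/

import Mathlib

open MvPolynomial

/-- Evaluation of a bivariate polynomial at a point of `ℝ × ℝ`
(the variable `X 0` is `x`, the variable `X 1` is `y`). -/
noncomputable def pev (P : MvPolynomial (Fin 2) ℝ) (q : ℝ × ℝ) : ℝ :=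
  MvPolynomial.eval ![q.1, q.2] P

/-- The line `{(x, y) | a * x + b * y + c = 0}`. -/
def lineSet (a b c : ℝ) : Set (ℝ × ℝ) := {q : ℝ × ℝ | a * q.1 + b * q.2 + c = 0}

/-- A subset of `ℝ²` is a line if it is the zero set of an affine form
`a * x + b * y + c` with `(a, b) ≠ (0, 0)`. -/
def IsLine (L : Set (ℝ × ℝ)) : Prop :=
  ∃ a b c : ℝ, (a, b) ≠ (0, 0) ∧ L = lineSet a b c

/-- The line `L` is invariant by the polynomial vector field `χ = P ∂x + Q ∂y`:
for a defining affine form `a * x + b * y + c` of `L`, the polynomial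
`a * P + b * Q` vanishes at every point of `L`. -/
def InvLine (P Q : MvPolynomial (Fin 2) ℝ) (L : Set (ℝ × ℝ)) : Prop :=
  ∃ a b c : ℝ, (a, b) ≠ (0, 0) ∧ L = lineSet a b c ∧
    ∀ q ∈ L, a * pev P q + b * pev Q q = 0

open scoped Classical in
/-- The number of lines of the arrangement `A` passing through the point `q`. -/
noncomputable def numThrough (A : Finset (Set (ℝ × ℝ))) (q : ℝ × ℝ) : ℕ :=
  (A.filter (fun L => q ∈ L)).card

/-- `mArr A` is the maximal number of lines of `A` passing through a common point. -/
noncomputable def mArr (A : Finset (Set (ℝ × ℝ))) : ℕ :=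
  sSup (Set.range (numThrough A))

/-- Two lines are parallel if they are equal or disjoint. -/
def ParLines (L L' : Set (ℝ × ℝ)) : Prop := L = L' ∨ L ∩ L' = ∅

/-- `pArr A` is the maximal number of pairwise parallel lines in `A`. -/
noncomputable def pArr (A : Finset (Set (ℝ × ℝ))) : ℕ :=
  sSup {k : ℕ | ∃ S : Finset (Set (ℝ × ℝ)), S ⊆ A ∧
    (∀ L ∈ S, ∀ L' ∈ S, ParLines L L') ∧ S.card = k}

/-!
Write `χ = (P, Q)` and a line as `ℓ = a x + b y + c = 0` with `a² + b² = 1`. Then `ℓ` is prime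
in `ℝ[x, y]`, the line is invariant by `χ` exactly when `ℓ ∣ a P + b Q`, and a nonzero polynomial
`F` has at most `deg F` such line factors.

If `α P + β Q = 0` for some `(α, β) ≠ 0`, every line of `A` whose normal is not parallel to
`(α, β)` divides both `P` and `Q`, so `n ≤ p(A) + d`. Otherwise suppose that `χ` has infinitely
many invariant lines, and take one, `L₁`, whose equation does not divide `P`. All but finitely many
invariant lines cross `L₁`, and `χ` vanishes at each crossing, which is therefore one of the
finitely many zeros of `P` on `L₁`. Hence infinitely many invariant lines pass through a single
point `q₀ = (x₀, y₀)`, and `(y - y₀) P - (x - x₀) Q` vanishes on all of them, so it is zero: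
`χ = T · (x - x₀, y - y₀)` with `deg T = d - 1`. Every line of `A` missing `q₀` then divides `T`,
so `n ≤ m(A) + d - 1`.
-/

section

variable {R : Type*} [CommRing R]

lemma X_zero_dvd_sub_aeval (G : MvPolynomial (Fin 2) R) : X 0 ∣ G - aeval ![0, X 1] G := by
  rw [← Ideal.mem_span_singleton, ← Ideal.Quotient.mk_eq_mk_iff_sub_mem]
  have : (Ideal.Quotient.mkₐ R (Ideal.span {(X 0 : MvPolynomial (Fin 2) R)})).comp
      (aeval ![0, X 1]) = Ideal.Quotient.mkₐ R _ := by
    apply algHom_ext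
    intro i
    fin_cases i <;> simp
  exact (congrArg (· G) this).symm

lemma X_zero_dvd_of_aeval_eq_zero {G : MvPolynomial (Fin 2) R}
    (hG : aeval ![(0 : Polynomial R), Polynomial.X] G = 0) : X 0 ∣ G := by
  have h : aeval ![0, (X 1 : MvPolynomial (Fin 2) R)] G =
      Polynomial.aeval (X 1) (aeval ![(0 : Polynomial R), Polynomial.X] G) := by
    rw [comp_aeval_apply]
    congr 1
    ext i
    fin_cases i <;> simp
  simpa only [h, hG, map_zero, sub_zero] using X_zero_dvd_sub_aeval G

end

lemma sq_add_sq_pos {a b : ℝ} (hab : (a, b) ≠ (0, 0)) : 0 < a ^ 2 + b ^ 2 := by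
  refine lt_of_le_of_ne (by positivity) fun h0 => hab ?_
  have ha : a = 0 := by nlinarith [sq_nonneg a, sq_nonneg b]
  have hb : b = 0 := by nlinarith [sq_nonneg a, sq_nonneg b]
  rw [ha, hb]

lemma ne_zero_of_sq_add_sq_eq_one {a b : ℝ} (h : a ^ 2 + b ^ 2 = 1) : (a, b) ≠ (0, 0) := by
  rintro ⟨⟩
  norm_num at h

lemma exists_eq_mul_of_det_eq_zero {a b a' b' : ℝ} (h : a ^ 2 + b ^ 2 = 1)
    (hab' : (a', b') ≠ (0, 0)) (hdet : a * b' - a' * b = 0) :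
    ∃ t ≠ 0, a' = t * a ∧ b' = t * b := by
  have ha' : a' = (a * a' + b * b') * a := by linear_combination (-b) * hdet - a' * h
  have hb' : b' = (a * a' + b * b') * b := by linear_combination a * hdet - b' * h
  refine ⟨_, fun ht => hab' (Prod.ext ?_ ?_), ha', hb'⟩
  · exact ha'.trans (by rw [ht, zero_mul])
  · exact hb'.trans (by rw [ht, zero_mul])

lemma eq_zero_of_det_ne_zero {a b a' b' x y : ℝ} (hdet : a * b' - a' * b ≠ 0)
    (h : a * x + b * y = 0) (h' : a' * x + b' * y = 0) : x = 0 :=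
  (mul_eq_zero.mp (by linear_combination b' * h - b * h')).resolve_left hdet

lemma pev_mul (F G : MvPolynomial (Fin 2) ℝ) (q : ℝ × ℝ) : pev (F * G) q = pev F q * pev G q :=
  map_mul _ _ _

lemma pev_sub (F G : MvPolynomial (Fin 2) ℝ) (q : ℝ × ℝ) : pev (F - G) q = pev F q - pev G q :=
  map_sub _ _ _

lemma pev_C_mul_add_C_mul (α β : ℝ) (P Q : MvPolynomial (Fin 2) ℝ) (q : ℝ × ℝ) :
    pev (C α * P + C β * Q) q = α * pev P q + β * pev Q q := by
  simp [pev]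

lemma mem_lineSet {a b c : ℝ} {q : ℝ × ℝ} : q ∈ lineSet a b c ↔ a * q.1 + b * q.2 + c = 0 :=
  Iff.rfl

lemma lineSet_mul_left {a b c t : ℝ} (ht : t ≠ 0) :
    lineSet (t * a) (t * b) (t * c) = lineSet a b c := by
  ext q
  simp only [mem_lineSet, show t * a * q.1 + t * b * q.2 + t * c =
    t * (a * q.1 + b * q.2 + c) by ring, mul_eq_zero, ht, false_or]

lemma exists_mem_lineSet_inter {a b c a' b' c' : ℝ} (hdet : a * b' - a' * b ≠ 0) :
    ∃ q, q ∈ lineSet a b c ∧ q ∈ lineSet a' b' c' := by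
  have hD := mul_inv_cancel₀ hdet
  refine ⟨((b * c' - b' * c) / (a * b' - a' * b), (a' * c - a * c') / (a * b' - a' * b)), ?_, ?_⟩
  · rw [mem_lineSet, div_eq_mul_inv, div_eq_mul_inv]
    linear_combination (-c) * hD
  · rw [mem_lineSet, div_eq_mul_inv, div_eq_mul_inv]
    linear_combination (-c') * hD

lemma parLines_lineSet (a b c c' : ℝ) : ParLines (lineSet a b c) (lineSet a b c') := by
  rcases eq_or_ne c c' with rfl | hc
  · exact Or.inl rfl
  · refine Or.inr (Set.eq_empty_of_forall_notMem fun q ⟨hq, hq'⟩ => hc ?_)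
    rw [mem_lineSet] at hq hq'
    linarith

noncomputable def lineForm (a b c : ℝ) : MvPolynomial (Fin 2) ℝ :=
  C a * X 0 + C b * X 1 + C c

@[simp]
lemma pev_lineForm (a b c : ℝ) (q : ℝ × ℝ) : pev (lineForm a b c) q = a * q.1 + b * q.2 + c := by
  simp [pev, lineForm]

lemma pev_eq_zero_of_lineForm_dvd {a b c : ℝ} {F : MvPolynomial (Fin 2) ℝ}
    (hF : lineForm a b c ∣ F) {q : ℝ × ℝ} (hq : q ∈ lineSet a b c) : pev F q = 0 := by
  obtain ⟨G, rfl⟩ := hF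
  rw [pev_mul, pev_lineForm, mem_lineSet.mp hq, zero_mul]

-- The isometry `(x, y) ↦ (a x + b y + c, -b x + a y)`, acting on polynomials by substitution.
noncomputable def lineCoord (a b c : ℝ) (h : a ^ 2 + b ^ 2 = 1) :
    MvPolynomial (Fin 2) ℝ ≃ₐ[ℝ] MvPolynomial (Fin 2) ℝ :=
  have hC : (C a : MvPolynomial (Fin 2) ℝ) ^ 2 + C b ^ 2 = 1 := by
    rw [← map_pow, ← map_pow, ← map_add, h, map_one]
  AlgEquiv.ofAlgHom (aeval ![lineForm a b c, C (-b) * X 0 + C a * X 1])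
    (aeval ![C a * X 0 + C (-b) * X 1 + C (-(a * c)), C b * X 0 + C a * X 1 + C (-(b * c))])
    (by
      refine algHom_ext (Fin.forall_fin_two.mpr ⟨?_, ?_⟩) <;>
        simp only [lineForm, AlgHom.comp_apply, AlgHom.id_apply, aeval_X, map_add, map_mul,
          map_neg, algHom_C, algebraMap_eq, Matrix.cons_val_zero, Matrix.cons_val_one,
          Matrix.cons_val_fin_one]
      · linear_combination (X 0 : MvPolynomial (Fin 2) ℝ) * hC
      · linear_combination (X 1 : MvPolynomial (Fin 2) ℝ) * hC)
    (by
      refine algHom_ext (Fin.forall_fin_two.mpr ⟨?_, ?_⟩) <;>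
        simp only [lineForm, AlgHom.comp_apply, AlgHom.id_apply, aeval_X, map_add, map_mul,
          map_neg, algHom_C, algebraMap_eq, Matrix.cons_val_zero, Matrix.cons_val_one,
          Matrix.cons_val_fin_one]
      · linear_combination (X 0 - C c : MvPolynomial (Fin 2) ℝ) * hC
      · linear_combination (X 1 : MvPolynomial (Fin 2) ℝ) * hC)

lemma lineCoord_X_zero (a b c : ℝ) (h : a ^ 2 + b ^ 2 = 1) :
    lineCoord a b c h (X 0) = lineForm a b c := by
  simp [lineCoord]

noncomputable def restrictLine (a b c : ℝ) : MvPolynomial (Fin 2) ℝ →ₐ[ℝ] Polynomial ℝ :=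
  aeval ![Polynomial.C (-(a * c)) - Polynomial.C b * Polynomial.X,
    Polynomial.C (-(b * c)) + Polynomial.C a * Polynomial.X]

lemma eval_restrictLine (a b c : ℝ) (F : MvPolynomial (Fin 2) ℝ) (v : ℝ) :
    (restrictLine a b c F).eval v = pev F (-(a * c) - b * v, -(b * c) + a * v) := by
  rw [restrictLine, pev, ← Polynomial.coe_evalRingHom, ← AlgHom.coe_toRingHom, ← RingHom.comp_apply]
  congr 1
  ext i
  · simp
  · fin_cases i <;> simp

lemma restrictLine_eq_comp (a b c : ℝ) (h : a ^ 2 + b ^ 2 = 1) :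
    restrictLine a b c = (aeval ![0, Polynomial.X]).comp (lineCoord a b c h).symm.toAlgHom := by
  refine algHom_ext (Fin.forall_fin_two.mpr ⟨?_, ?_⟩) <;>
  · simp only [restrictLine, lineCoord, AlgHom.comp_apply, AlgEquiv.coe_toAlgHom,
      AlgEquiv.ofAlgHom_symm_apply, aeval_X, map_add, map_mul, map_neg, algHom_C,
      Polynomial.algebraMap_eq, Matrix.cons_val_zero, Matrix.cons_val_one, Matrix.cons_val_fin_one]
    ring

lemma lineForm_dvd_of_restrictLine_eq_zero {a b c : ℝ} (h : a ^ 2 + b ^ 2 = 1)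
    {F : MvPolynomial (Fin 2) ℝ} (hF : restrictLine a b c F = 0) : lineForm a b c ∣ F := by
  rw [restrictLine_eq_comp a b c h] at hF
  obtain ⟨H, hH⟩ := X_zero_dvd_of_aeval_eq_zero hF
  refine ⟨lineCoord a b c h H, ?_⟩
  rw [← lineCoord_X_zero a b c h, ← map_mul, ← hH]
  simp

section NormalizedLine

variable {a b c : ℝ}

lemma lineForm_dvd_iff (h : a ^ 2 + b ^ 2 = 1) {F : MvPolynomial (Fin 2) ℝ} :
    lineForm a b c ∣ F ↔ ∀ q ∈ lineSet a b c, pev F q = 0 := by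
  refine ⟨fun hF q hq => pev_eq_zero_of_lineForm_dvd hF hq, fun hF => ?_⟩
  refine lineForm_dvd_of_restrictLine_eq_zero h (Polynomial.funext fun v => ?_)
  rw [eval_restrictLine, Polynomial.eval_zero]
  exact hF _ (by rw [mem_lineSet]; linear_combination (-c) * h)

lemma finite_setOf_mem_lineSet_pev_eq_zero (h : a ^ 2 + b ^ 2 = 1) {F : MvPolynomial (Fin 2) ℝ}
    (hF : ¬ lineForm a b c ∣ F) : {q | q ∈ lineSet a b c ∧ pev F q = 0}.Finite := by
  have hF' : restrictLine a b c F ≠ 0 := fun h0 => hF (lineForm_dvd_of_restrictLine_eq_zero h h0)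
  refine ((Polynomial.finite_setOfPred_isRoot hF').image
    fun v => (-(a * c) - b * v, -(b * c) + a * v)).subset ?_
  rintro q ⟨hq, hFq⟩
  have hq' : q = (-(a * c) - b * (-b * q.1 + a * q.2), -(b * c) + a * (-b * q.1 + a * q.2)) := by
    rw [mem_lineSet] at hq
    ext
    · linear_combination a * hq - q.1 * h
    · linear_combination b * hq - q.2 * h
  refine ⟨-b * q.1 + a * q.2, ?_, hq'.symm⟩
  rw [Set.mem_ofPred_eq, Polynomial.IsRoot, eval_restrictLine, ← hq', hFq]

lemma prime_lineForm (h : a ^ 2 + b ^ 2 = 1) : Prime (lineForm a b c) := by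
  rw [← lineCoord_X_zero a b c h]
  exact (MulEquiv.prime_iff (lineCoord a b c h).toMulEquiv).mpr X_prime

lemma totalDegree_lineForm (h : a ^ 2 + b ^ 2 = 1) : (lineForm a b c).totalDegree = 1 := by
  refine le_antisymm ?_ (Nat.one_le_iff_ne_zero.mpr fun h0 => ?_)
  · have hX (r : ℝ) (i : Fin 2) : (C r * X i : MvPolynomial (Fin 2) ℝ).totalDegree ≤ 1 :=
      (totalDegree_mul _ _).trans (by simp [totalDegree_C, totalDegree_X])
    exact (totalDegree_add _ _).trans
      (max_le ((totalDegree_add _ _).trans (max_le (hX a 0) (hX b 1))) (by simp [totalDegree_C]))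
  · have hp := prime_lineForm (c := c) h
    rw [totalDegree_eq_zero_iff_eq_C.mp h0] at hp
    exact hp.not_isUnit ((isUnit_iff_ne_zero.mpr fun hk => hp.ne_zero (by rw [hk, map_zero])).map C)

lemma totalDegree_lineForm_mul (h : a ^ 2 + b ^ 2 = 1) {G : MvPolynomial (Fin 2) ℝ} (hG : G ≠ 0) :
    (lineForm a b c * G).totalDegree = G.totalDegree + 1 := by
  rw [totalDegree_mul_of_isDomain (prime_lineForm h).ne_zero hG, totalDegree_lineForm h, add_comm]

end NormalizedLine

lemma lineSet_eq_of_lineForm_dvd {a b c a' b' c' : ℝ} (h : a ^ 2 + b ^ 2 = 1)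
    (h' : a' ^ 2 + b' ^ 2 = 1) (hdvd : lineForm a b c ∣ lineForm a' b' c') :
    lineSet a b c = lineSet a' b' c' := by
  have hassoc := (prime_lineForm h).associated_of_dvd (prime_lineForm h') hdvd
  refine Set.Subset.antisymm (fun q hq => ?_) (fun q hq => ?_)
  · simpa [mem_lineSet] using pev_eq_zero_of_lineForm_dvd hdvd hq
  · simpa [mem_lineSet] using pev_eq_zero_of_lineForm_dvd hassoc.symm.dvd hq

lemma InvLine.exists_normalized {P Q : MvPolynomial (Fin 2) ℝ} {L : Set (ℝ × ℝ)}
    (hL : InvLine P Q L) : ∃ a b c : ℝ, a ^ 2 + b ^ 2 = 1 ∧ L = lineSet a b c ∧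
      lineForm a b c ∣ C a * P + C b * Q := by
  obtain ⟨a, b, c, hab, rfl, hv⟩ := hL
  have hpos := sq_add_sq_pos hab
  set s := √(a ^ 2 + b ^ 2)
  have hs : s⁻¹ ≠ 0 := inv_ne_zero (Real.sqrt_pos.mpr hpos).ne'
  have hn : (s⁻¹ * a) ^ 2 + (s⁻¹ * b) ^ 2 = 1 := by
    rw [mul_pow, mul_pow, ← mul_add, inv_pow, Real.sq_sqrt hpos.le, inv_mul_cancel₀ hpos.ne']
  have hL := lineSet_mul_left (a := a) (b := b) (c := c) hs
  refine ⟨_, _, _, hn, hL.symm, (lineForm_dvd_iff hn).mpr fun q hq => ?_⟩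
  rw [pev_C_mul_add_C_mul]
  linear_combination s⁻¹ * hv q (hL ▸ hq)

def linesDividing (F : MvPolynomial (Fin 2) ℝ) : Set (Set (ℝ × ℝ)) :=
  {L | ∃ a b c : ℝ, a ^ 2 + b ^ 2 = 1 ∧ L = lineSet a b c ∧ lineForm a b c ∣ F}

lemma card_le_totalDegree_of_subset_linesDividing {F : MvPolynomial (Fin 2) ℝ} (hF : F ≠ 0)
    {S : Finset (Set (ℝ × ℝ))} (hS : ↑S ⊆ linesDividing F) : S.card ≤ F.totalDegree := by
  classical
  induction S using Finset.induction_on generalizing F with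
  | empty => simp
  | insert L S hLS ih =>
    obtain ⟨a, b, c, h, rfl, G, rfl⟩ := hS (Finset.mem_insert_self _ _)
    have hG : G ≠ 0 := right_ne_zero_of_mul hF
    have hSG : ↑S ⊆ linesDividing G := by
      intro L' hL'
      obtain ⟨a', b', c', h', rfl, hdvd⟩ := hS (Finset.mem_insert_of_mem hL')
      refine ⟨a', b', c', h', rfl, ((prime_lineForm h').dvd_or_dvd hdvd).resolve_left fun hd => ?_⟩
      exact hLS (lineSet_eq_of_lineForm_dvd h' h hd ▸ hL')
    rw [Finset.card_insert_of_notMem hLS, totalDegree_lineForm_mul h hG]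
    exact Nat.add_le_add_right (ih hG hSG) 1

lemma finite_linesDividing {F : MvPolynomial (Fin 2) ℝ} (hF : F ≠ 0) :
    (linesDividing F).Finite := by
  by_contra hinf
  obtain ⟨S, hS, hcard⟩ := Set.Infinite.exists_subset_card_eq hinf (F.totalDegree + 1)
  have := card_le_totalDegree_of_subset_linesDividing hF hS
  omega

open scoped Classical in
lemma numThrough_le_mArr (A : Finset (Set (ℝ × ℝ))) (q : ℝ × ℝ) : numThrough A q ≤ mArr A :=
  le_csSup ⟨A.card, by rintro _ ⟨q', rfl⟩; exact Finset.card_filter_le _ _⟩ ⟨q, rfl⟩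

lemma card_le_pArr {A S : Finset (Set (ℝ × ℝ))} (hS : S ⊆ A)
    (hpar : ∀ L ∈ S, ∀ L' ∈ S, ParLines L L') : S.card ≤ pArr A :=
  le_csSup ⟨A.card, by rintro _ ⟨S', hS', -, rfl⟩; exact Finset.card_le_card hS'⟩ ⟨S, hS, hpar, rfl⟩

section VectorField

variable {P Q : MvPolynomial (Fin 2) ℝ}

lemma dvd_and_dvd_of_C_mul_add_C_mul_eq_zero {α β a b : ℝ} {f : MvPolynomial (Fin 2) ℝ}
    (h0 : C α * P + C β * Q = 0) (hdet : α * b - a * β ≠ 0) (hf : f ∣ C a * P + C b * Q) :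
    f ∣ P ∧ f ∣ Q := by
  have hu : IsUnit (C (α * b - a * β) : MvPolynomial (Fin 2) ℝ) := (Ne.isUnit hdet).map C
  have hP : C (α * b - a * β) * P = -C β * (C a * P + C b * Q) := by
    rw [map_sub, map_mul, map_mul]; linear_combination C b * h0
  have hQ : C (α * b - a * β) * Q = C α * (C a * P + C b * Q) := by
    rw [map_sub, map_mul, map_mul]; linear_combination (-C a) * h0
  exact ⟨hu.dvd_mul_left.mp (hP ▸ dvd_mul_of_dvd_right hf _),
    hu.dvd_mul_left.mp (hQ ▸ dvd_mul_of_dvd_right hf _)⟩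

open scoped Classical in
lemma card_le_pArr_add_of_C_mul_add_C_mul_eq_zero {A : Finset (Set (ℝ × ℝ))}
    (hfix : ∀ L ∈ A, InvLine P Q L) {α β : ℝ} (hαβ : (α, β) ≠ (0, 0))
    (h0 : C α * P + C β * Q = 0) (hPQ : P ≠ 0 ∨ Q ≠ 0) :
    A.card ≤ pArr A + max P.totalDegree Q.totalDegree := by
  have hpar : (A.filter fun L => ∃ γ, L = lineSet α β γ).card ≤ pArr A := by
    refine card_le_pArr (Finset.filter_subset _ _) ?_
    simp only [Finset.mem_filter]
    rintro _ ⟨-, γ, rfl⟩ _ ⟨-, γ', rfl⟩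
    exact parLines_lineSet α β γ γ'
  have hrest : ∀ L ∈ A.filter (fun L => ¬ ∃ γ, L = lineSet α β γ),
      L ∈ linesDividing P ∧ L ∈ linesDividing Q := by
    simp only [Finset.mem_filter]
    rintro L ⟨hLA, hL⟩
    obtain ⟨a, b, c, h, rfl, hdvd⟩ := (hfix L hLA).exists_normalized
    have hdet : α * b - a * β ≠ 0 := fun hdet => by
      obtain ⟨t, ht, rfl, rfl⟩ := exists_eq_mul_of_det_eq_zero h hαβ (by linear_combination -hdet)
      exact hL ⟨t * c, (lineSet_mul_left ht).symm⟩
    obtain ⟨hP, hQ⟩ := dvd_and_dvd_of_C_mul_add_C_mul_eq_zero h0 hdet hdvd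
    exact ⟨⟨a, b, c, h, rfl, hP⟩, ⟨a, b, c, h, rfl, hQ⟩⟩
  have hcard : (A.filter fun L => ¬ ∃ γ, L = lineSet α β γ).card ≤
      max P.totalDegree Q.totalDegree := by
    rcases hPQ with hP | hQ
    · exact (card_le_totalDegree_of_subset_linesDividing hP fun L hL => (hrest L hL).1).trans
        (le_max_left _ _)
    · exact (card_le_totalDegree_of_subset_linesDividing hQ fun L hL => (hrest L hL).2).trans
        (le_max_right _ _)
  have := Finset.card_filter_add_card_filter_not (s := A) (p := fun L => ∃ γ, L = lineSet α β γ)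
  omega

lemma dvd_C_mul_add_C_mul_of_det_eq_zero {a₁ b₁ a b : ℝ} {f : MvPolynomial (Fin 2) ℝ}
    (h₁ : a₁ ^ 2 + b₁ ^ 2 = 1) (hab : (a, b) ≠ (0, 0)) (hdet : a₁ * b - a * b₁ = 0)
    (hf : f ∣ C a * P + C b * Q) : f ∣ C a₁ * P + C b₁ * Q := by
  obtain ⟨t, ht, rfl, rfl⟩ := exists_eq_mul_of_det_eq_zero h₁ hab hdet
  have hu : IsUnit (C t : MvPolynomial (Fin 2) ℝ) := (Ne.isUnit ht).map C
  rw [map_mul, map_mul, mul_assoc, mul_assoc, ← mul_add] at hf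
  exact hu.dvd_mul_left.mp hf

lemma exists_infinite_invLines_through
    (hnz : ∀ α β : ℝ, (α, β) ≠ (0, 0) → C α * P + C β * Q ≠ 0)
    (hinf : {M | InvLine P Q M}.Infinite) : ∃ q₀, {M | InvLine P Q M ∧ q₀ ∈ M}.Infinite := by
  have hP : P ≠ 0 := by simpa using hnz 1 0 (by simp)
  obtain ⟨L₁, hL₁, hL₁P⟩ := (hinf.sdiff (finite_linesDividing hP)).nonempty
  obtain ⟨a₁, b₁, c₁, h₁, rfl, hdvd₁⟩ := InvLine.exists_normalized hL₁
  have hZ := finite_setOf_mem_lineSet_pev_eq_zero h₁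
    fun hd => hL₁P ⟨a₁, b₁, c₁, h₁, rfl, hd⟩
  by_contra! hfin
  refine hinf (((finite_linesDividing (hnz a₁ b₁ (ne_zero_of_sq_add_sq_eq_one h₁))).union
    (hZ.biUnion fun q _ => hfin q)).subset fun M hM => ?_)
  obtain ⟨a, b, c, h, rfl, hdvd⟩ := InvLine.exists_normalized hM
  by_cases hdet : a₁ * b - a * b₁ = 0
  · exact Or.inl ⟨a, b, c, h, rfl,
      dvd_C_mul_add_C_mul_of_det_eq_zero h₁ (ne_zero_of_sq_add_sq_eq_one h) hdet hdvd⟩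
  · obtain ⟨q, hq₁, hq⟩ := exists_mem_lineSet_inter (c := c₁) (c' := c) hdet
    have hv₁ := pev_eq_zero_of_lineForm_dvd hdvd₁ hq₁
    have hv := pev_eq_zero_of_lineForm_dvd hdvd hq
    rw [pev_C_mul_add_C_mul] at hv₁ hv
    exact Or.inr (Set.mem_biUnion ⟨hq₁, eq_zero_of_det_ne_zero hdet hv₁ hv⟩ ⟨hM, hq⟩)

lemma radial_of_infinite_invLines_through {q₀ : ℝ × ℝ}
    (hinf : {M | InvLine P Q M ∧ q₀ ∈ M}.Infinite) :
    lineForm 0 1 (-q₀.2) * P = lineForm 1 0 (-q₀.1) * Q := by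
  by_contra hne
  refine hinf ((finite_linesDividing (sub_ne_zero.mpr hne)).subset ?_)
  rintro M ⟨hM, hq₀⟩
  obtain ⟨a, b, c, h, rfl, hdvd⟩ := hM.exists_normalized
  refine ⟨a, b, c, h, rfl, (lineForm_dvd_iff h).mpr fun q hq => ?_⟩
  have hv := pev_eq_zero_of_lineForm_dvd hdvd hq
  rw [pev_C_mul_add_C_mul] at hv
  rw [mem_lineSet] at hq hq₀
  rw [pev_sub, pev_mul, pev_mul, pev_lineForm, pev_lineForm]
  linear_combination (-((q.2 - q₀.2) * pev P q - (q.1 - q₀.1) * pev Q q)) * h +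
    (a * (q.2 - q₀.2) - b * (q.1 - q₀.1)) * hv + (b * pev P q - a * pev Q q) * (hq - hq₀)

lemma exists_eq_mul_of_radial {x y : ℝ} (h : lineForm 0 1 (-y) * P = lineForm 1 0 (-x) * Q) :
    ∃ T, P = lineForm 1 0 (-x) * T ∧ Q = lineForm 0 1 (-y) * T := by
  have h₁₀ : (1 : ℝ) ^ 2 + 0 ^ 2 = 1 := by norm_num
  have h₀₁ : (0 : ℝ) ^ 2 + 1 ^ 2 = 1 := by norm_num
  have hxy : ¬ lineForm 1 0 (-x) ∣ lineForm 0 1 (-y) := fun hd => by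
    have hmem : (x, y + 1) ∈ lineSet 1 0 (-x) := by rw [mem_lineSet]; ring
    rw [lineSet_eq_of_lineForm_dvd h₁₀ h₀₁ hd, mem_lineSet] at hmem
    norm_num at hmem
  obtain ⟨T, rfl⟩ := ((prime_lineForm h₁₀).dvd_or_dvd ⟨Q, h⟩).resolve_left hxy
  refine ⟨T, rfl, (mul_left_cancel₀ (prime_lineForm (c := -x) h₁₀).ne_zero ?_).symm⟩
  rw [← h]
  ring

open scoped Classical in
lemma card_le_mArr_add_of_radial {A : Finset (Set (ℝ × ℝ))} (hfix : ∀ L ∈ A, InvLine P Q L)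
    {q₀ : ℝ × ℝ} {T : MvPolynomial (Fin 2) ℝ} (hP : P = lineForm 1 0 (-q₀.1) * T)
    (hQ : Q = lineForm 0 1 (-q₀.2) * T) (hT : T ≠ 0) :
    A.card ≤ mArr A + T.totalDegree := by
  have hrest : ↑(A.filter fun L => q₀ ∉ L) ⊆ linesDividing T := by
    intro L hL
    obtain ⟨hLA, hq₀L⟩ := Finset.mem_filter.mp hL
    obtain ⟨a, b, c, h, rfl, hdvd⟩ := (hfix L hLA).exists_normalized
    have hPQ : C a * P + C b * Q = lineForm a b (-(a * q₀.1 + b * q₀.2)) * T := by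
      rw [hP, hQ]
      simp only [lineForm, map_one, map_zero, map_neg, map_add, map_mul]
      ring
    rw [hPQ] at hdvd
    refine ⟨a, b, c, h, rfl, ((prime_lineForm h).dvd_or_dvd hdvd).resolve_left fun hd => hq₀L ?_⟩
    rw [lineSet_eq_of_lineForm_dvd h h hd, mem_lineSet]
    ring
  have := card_le_totalDegree_of_subset_linesDividing hT hrest
  have := numThrough_le_mArr A q₀
  have := Finset.card_filter_add_card_filter_not (s := A) (p := fun L => q₀ ∈ L)
  unfold numThrough at *
  omega

end VectorField

theorem mid_degree_fixing_is_finite_type_general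
    (A : Finset (Set (ℝ × ℝ))) (d : ℕ)
    (hd0 : 0 < d) (hd : d < min (A.card - mArr A + 1) (A.card - pArr A))
    (P Q : MvPolynomial (Fin 2) ℝ)
    (hdeg : max P.totalDegree Q.totalDegree = d)
    (hfix : ∀ L ∈ A, InvLine P Q L) :
    {M : Set (ℝ × ℝ) | InvLine P Q M}.Finite := by
  rw [lt_min_iff] at hd
  have hPQ : P ≠ 0 ∨ Q ≠ 0 := by
    by_contra! h0
    rw [h0.1, h0.2, totalDegree_zero, max_self] at hdeg
    omega
  have hnz (α β : ℝ) (hαβ : (α, β) ≠ (0, 0)) : C α * P + C β * Q ≠ 0 := fun h0 => by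
    have := card_le_pArr_add_of_C_mul_add_C_mul_eq_zero hfix hαβ h0 hPQ
    omega
  by_contra hinf
  obtain ⟨q₀, hq₀⟩ := exists_infinite_invLines_through hnz hinf
  obtain ⟨T, hP, hQ⟩ := exists_eq_mul_of_radial (radial_of_infinite_invLines_through hq₀)
  have hT : T ≠ 0 := by
    rintro rfl
    exact hnz 1 0 (by simp) (by simp [hP, hQ])
  have hcard := card_le_mArr_add_of_radial hfix hP hQ hT
  have hdegP : P.totalDegree = T.totalDegree + 1 := by
    rw [hP, totalDegree_lineForm_mul (by norm_num) hT]
  have := hdeg ▸ le_max_left P.totalDegree Q.totalDegree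
  omega

/-- **Theorem.** Let `A` be a line arrangement with `n` lines and
`ν_f(A) = min (n - m(A) + 1) (n - p(A))`. If `0 < d < ν_f(A)`, then every
polynomial vector field of degree exactly `d` fixing every line of `A` has only a
finite set of invariant lines, i.e. `D_d(A) = D_d^f(A)`. -/
theorem mid_degree_fixing_is_finite_type
    (A : Finset (Set (ℝ × ℝ))) (hA : ∀ L ∈ A, IsLine L) (d : ℕ)
    (hd0 : 0 < d) (hd : d < min (A.card - mArr A + 1) (A.card - pArr A))
    (P Q : MvPolynomial (Fin 2) ℝ)
    (hdeg : max P.totalDegree Q.totalDegree = d)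
    (hfix : ∀ L ∈ A, InvLine P Q L) :
    {M : Set (ℝ × ℝ) | InvLine P Q M}.Finite :=
  mid_degree_fixing_is_finite_type_general A d hd0 hd P Q hdeg hfix
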